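/- arXiv:2503.02370 — 2 statements merged into one kernel-verified Lean document; each statement's English description precedes it below -/
import Mathlib

section
/- Suppose M > L_g‖L_p‖, μ > M + L_g‖L_p‖, δ ≥ 0, and (x_k)_{k≥0} is a RHOTA sequence such that for each k the inexact optimality condition holds and y_{k+1} is a global minimizer over C of y ↦ f(y) + (μ/(p+1)!)‖y − x_k‖^{p+1}. Then for every k ≥ 0 there exists j ∈ {0, …, k} such that ‖y_{j+1} − x_j‖^{p+1} ≤ L_μ (f(x_0) − f^*)(p+1)!/((M − L_g‖L_p‖)(k+1)); equivalently, the optimality residual satisfies ((μ/p!)‖y_{j+1} − x_j‖^{p})^{(p+1)/p} ≤ L_μ (μ/p!)^{(p+1)/p} (f(x_0) − f^*)(p+1)!/((M − L_g‖L_p‖)(k+1)). -/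
/-!
Along `t ↦ x + t • (y - x)` the Lipschitz bound on `D^p F_i` bounds the `p`-th derivative of the
Taylor remainder by `L_p^i ‖y - x‖^{p+1} t`; integrating `p` times by comparison gives
`|F_i y - T_p^{F_i}(y; x)| ≤ L_p^i ‖y - x‖^{p+1} / (p+1)!`, and composing with the Lipschitz `g`
sandwiches the objective between shifts of the model:
`f y ≤ s_M(y; x) + (L_g‖L_p‖ - M)/(p+1)! ‖y - x‖^{p+1}` and
`s_M(y; x) ≤ f y + (M + L_g‖L_p‖)/(p+1)! ‖y - x‖^{p+1}`.
The first inequality turns the model decrease into a sufficient decrease of `f` by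
`(M - L_g‖L_p‖)/(p+1)! ‖x_{k+1} - x_k‖^{p+1}`; telescoping, the smallest of the first `k + 1` steps
is at most `(f(x_0) - f^*) (p+1)! / ((M - L_g‖L_p‖)(k+1))`.
The proximal point `y_{k+1}` lies within `D_k` of `x_k`, so it competes in the inexact minimization
of the model; together with its own optimality and both sides of the sandwich this gives
`‖y_{k+1} - x_k‖^{p+1} ≤ L_μ ‖x_{k+1} - x_k‖^{p+1}`.
-/

open scoped BigOperators RealInnerProductSpace

noncomputable section

/-- The vector `(F_1(x), …, F_m(x)) ∈ ℝ^m` (with the Euclidean norm). -/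
def euclMap {n m : ℕ} (F : Fin m → EuclideanSpace ℝ (Fin n) → ℝ)
    (x : EuclideanSpace ℝ (Fin n)) : EuclideanSpace ℝ (Fin m) :=
  (EuclideanSpace.equiv (Fin m) ℝ).symm fun i => F i x

/-- The vector `T_p^F(y; x)` of `p`-th order Taylor approximations of the components
`F_i` around the center `x`, evaluated at `y`. -/
def taylorMap (p : ℕ) {n m : ℕ} (F : Fin m → EuclideanSpace ℝ (Fin n) → ℝ)
    (y x : EuclideanSpace ℝ (Fin n)) : EuclideanSpace ℝ (Fin m) :=
  (EuclideanSpace.equiv (Fin m) ℝ).symm fun i =>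
    ∑ j ∈ Finset.range (p + 1),
      (1 / (Nat.factorial j : ℝ)) * iteratedFDeriv ℝ j (F i) x (fun _ => y - x)

/-- The composite objective `f(x) = g(F(x)) + h(x)`. -/
def fObj {n m : ℕ} (F : Fin m → EuclideanSpace ℝ (Fin n) → ℝ)
    (g : EuclideanSpace ℝ (Fin m) → ℝ) (h : EuclideanSpace ℝ (Fin n) → ℝ)
    (x : EuclideanSpace ℝ (Fin n)) : ℝ :=
  g (euclMap F x) + h x

/-- The regularized higher-order Taylor model
`s_M(y; x̄) = g(T_p^F(y; x̄)) + (M/(p+1)!)‖y − x̄‖^{p+1} + h(y)`. -/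
def sModel (p : ℕ) {n m : ℕ} (F : Fin m → EuclideanSpace ℝ (Fin n) → ℝ)
    (g : EuclideanSpace ℝ (Fin m) → ℝ) (h : EuclideanSpace ℝ (Fin n) → ℝ) (M : ℝ)
    (y xb : EuclideanSpace ℝ (Fin n)) : ℝ :=
  g (taylorMap p F y xb) + M / (Nat.factorial (p + 1) : ℝ) * ‖y - xb‖ ^ (p + 1) + h y

open Finset Set
open scoped Nat

section Taylor

variable {E : Type*} [NormedAddCommGroup E] [NormedSpace ℝ E]

theorem hasDerivAt_iteratedFDeriv_apply_add_smul {p j : ℕ} {F : E → ℝ} (hF : ContDiff ℝ p F)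
    (hj : j < p) (x v : E) (t : ℝ) :
    HasDerivAt (fun s : ℝ => iteratedFDeriv ℝ j F (x + s • v) (fun _ => v))
      (iteratedFDeriv ℝ (j + 1) F (x + t • v) (fun _ => v)) t := by
  have hline : HasDerivAt (fun s : ℝ => x + s • v) v t := by
    simpa using ((hasDerivAt_id t).smul_const v).const_add x
  exact ((hF.differentiable_iteratedFDeriv (mod_cast hj) _).hasFDerivAt
    |>.continuousMultilinear_apply_const _).comp_hasDerivAt t hline

theorem hasDerivAt_pow_succ_div_factorial (i : ℕ) (t : ℝ) :
    HasDerivAt (fun s : ℝ => s ^ (i + 1) / (i + 1)!) (t ^ i / i !) t := by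
  refine ((hasDerivAt_pow (i + 1) t).div_const _).congr_deriv ?_
  push_cast [Nat.factorial_succ]
  field_simp

theorem hasDerivAt_sum_mul_pow_div_factorial (c : ℕ → ℝ) (m : ℕ) (t : ℝ) :
    HasDerivAt (fun s => ∑ i ∈ range (m + 1), c i * s ^ i / i !)
      (∑ i ∈ range m, c (i + 1) * t ^ i / i !) t := by
  have hterm : ∀ i ∈ range m, HasDerivAt (fun s => c (i + 1) * (s ^ (i + 1) / (i + 1)!))
      (c (i + 1) * (t ^ i / i !)) t := fun i _ =>
    (hasDerivAt_pow_succ_div_factorial i t).const_mul _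
  simp_rw [sum_range_succ', mul_div_assoc]
  simpa using (HasDerivAt.sum hterm).add_const (c 0)

theorem abs_le_of_hasDerivAt_iterate {u : ℕ → ℝ → ℝ} {k : ℕ} {C : ℝ}
    (hderiv : ∀ j < k, ∀ t, HasDerivAt (u j) (u (j + 1) t) t)
    (hzero : ∀ j < k, u j 0 = 0) (hbound : ∀ t, 0 ≤ t → |u k t| ≤ C * t) :
    ∀ t, 0 ≤ t → |u 0 t| ≤ C * t ^ (k + 1) / (k + 1)! := by
  induction k generalizing u with
  | zero => simpa using hbound
  | succ k ih =>
    have hu1 := ih (u := fun j => u (j + 1)) (fun j hj => hderiv (j + 1) (by omega))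
      (fun j hj => hzero (j + 1) (by omega)) hbound
    have hB : ∀ t, HasDerivAt (fun s => C * s ^ (k + 2) / (k + 2)!)
        (C * t ^ (k + 1) / (k + 1)!) t := fun t => by
      simpa only [mul_div_assoc] using (hasDerivAt_pow_succ_div_factorial (k + 1) t).const_mul C
    intro t ht
    refine image_norm_le_of_norm_deriv_right_le_deriv_boundary (f := u 0) (a := 0) (b := t)
      (fun s _ => (hderiv 0 (by omega) s).continuousAt.continuousWithinAt)
      (fun s _ => (hderiv 0 (by omega) s).hasDerivWithinAt) (by simp [hzero 0 (by omega)]) hB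
      (fun s hs => hu1 s hs.1) ⟨ht, le_rfl⟩

theorem abs_sub_taylor_le_of_lipschitz {p : ℕ} {F : E → ℝ} (hF : ContDiff ℝ p F) {L : ℝ}
    (hL : ∀ a b, ‖iteratedFDeriv ℝ p F a - iteratedFDeriv ℝ p F b‖ ≤ L * ‖a - b‖) (x y : E) :
    |F y - ∑ j ∈ range (p + 1), (1 / (j ! : ℝ)) * iteratedFDeriv ℝ j F x (fun _ => y - x)| ≤
      L / (p + 1)! * ‖y - x‖ ^ (p + 1) := by
  set v := y - x
  set Φ : ℕ → ℝ → ℝ := fun j t => iteratedFDeriv ℝ j F (x + t • v) (fun _ => v)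
  -- `u j` is the Taylor remainder at `0`, of order `p - j`, of `Φ j = (t ↦ F (x + t • v))⁽ʲ⁾`.
  set u : ℕ → ℝ → ℝ := fun j t =>
    Φ j t - ∑ i ∈ range (p + 1 - j), Φ (i + j) 0 * t ^ i / (i ! : ℝ)
  have hderiv : ∀ j < p, ∀ t, HasDerivAt (u j) (u (j + 1) t) t := by
    intro j hj t
    have hsum := hasDerivAt_sum_mul_pow_div_factorial (fun i => Φ (i + j) 0) (p - j) t
    rw [show p - j + 1 = p + 1 - j by omega] at hsum
    refine ((hasDerivAt_iteratedFDeriv_apply_add_smul hF hj x v t).sub hsum).congr_deriv ?_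
    simp only [u, Φ, Nat.add_sub_add_right, add_assoc, add_comm 1 j]
  have hzero : ∀ j < p, u j 0 = 0 := by
    intro j hj
    simp only [u]
    rw [show p + 1 - j = p - j + 1 by omega]
    simp [sum_range_succ']
  have hbound : ∀ t, 0 ≤ t → |u p t| ≤ L * ‖v‖ ^ (p + 1) * t := by
    intro t ht
    have hdiff := (iteratedFDeriv ℝ p F (x + t • v) - iteratedFDeriv ℝ p F x).le_opNorm
      (fun _ => v)
    have hlip := hL (x + t • v) x
    simp only [add_sub_cancel_left, norm_smul, Real.norm_of_nonneg ht, prod_const,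
      card_univ, Fintype.card_fin] at hdiff hlip
    have hup : u p t = Φ p t - Φ p 0 := by simp [u]
    calc |u p t| ≤ ‖iteratedFDeriv ℝ p F (x + t • v) - iteratedFDeriv ℝ p F x‖ * ‖v‖ ^ p := by
          simpa [hup, Φ] using hdiff
      _ ≤ L * (t * ‖v‖) * ‖v‖ ^ p := by gcongr
      _ = L * ‖v‖ ^ (p + 1) * t := by ring
  have key := abs_le_of_hasDerivAt_iterate hderiv hzero hbound 1 zero_le_one
  convert key using 2
  · simp [u, Φ, v, div_eq_inv_mul]
  · ring

end Taylor

theorem EuclideanSpace.norm_le_norm_of_abs_le {ι : Type*} [Fintype ι] {u w : EuclideanSpace ℝ ι}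
    (h : ∀ i, |u i| ≤ |w i|) : ‖u‖ ≤ ‖w‖ := by
  simp only [EuclideanSpace.norm_eq, Real.norm_eq_abs]
  exact Real.sqrt_le_sqrt (sum_le_sum fun i _ => pow_le_pow_left₀ (abs_nonneg _) (h i) 2)

theorem le_add_of_sub_csInf_image_le {α : Type*} {ψ : α → ℝ} {S : Set α} {b ε : ℝ}
    (hb : ∀ z ∈ S, b ≤ ψ z) {x y : α} (hy : y ∈ S) (h : ψ x - sInf (ψ '' S) ≤ ε) :
    ψ x ≤ ψ y + ε := by
  have := csInf_le ⟨b, forall_mem_image.2 hb⟩ (mem_image_of_mem ψ hy)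
  linarith

theorem norm_sub_le_of_forall_prox_le {E : Type*} [SeminormedAddCommGroup E] {f : E → ℝ}
    {C : Set E} {fstar μ : ℝ} {p : ℕ} (hμ : 0 < μ) (hlb : ∀ z ∈ C, fstar ≤ f z) {x y : E}
    (hx : x ∈ C) (hy : y ∈ C)
    (hmin : ∀ z ∈ C,
      f y + μ / (p + 1)! * ‖y - x‖ ^ (p + 1) ≤ f z + μ / (p + 1)! * ‖z - x‖ ^ (p + 1)) :
    ‖y - x‖ ≤ ((p + 1)! * (f x - fstar) / μ) ^ ((1 : ℝ) / (p + 1)) := by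
  have hQ : (0 : ℝ) < (p + 1)! := by positivity
  have hxy := hmin x hx
  rw [sub_self, norm_zero, zero_pow (Nat.succ_ne_zero p), mul_zero, add_zero] at hxy
  have hgap : 0 ≤ f x - fstar := by
    linarith [hlb y hy, mul_nonneg (div_pos hμ hQ).le (pow_nonneg (norm_nonneg (y - x)) (p + 1))]
  rw [one_div, Real.le_rpow_inv_iff_of_pos (norm_nonneg _) (by positivity) (by positivity),
    ← Nat.cast_succ, Real.rpow_natCast, le_div_iff₀ hμ]
  calc ‖y - x‖ ^ (p + 1) * μ = (p + 1)! * (μ / (p + 1)! * ‖y - x‖ ^ (p + 1)) := by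
        field_simp
    _ ≤ (p + 1)! * (f x - fstar) := by gcongr; linarith [hlb y hy]

theorem exists_le_div_of_forall_add_le {a r : ℕ → ℝ} {α b : ℝ} (hα : 0 < α)
    (hdesc : ∀ k, a (k + 1) + α * r k ≤ a k) (hb : ∀ k, b ≤ a k) (k : ℕ) :
    ∃ j ≤ k, r j ≤ (a 0 - b) / (α * (k + 1)) := by
  have htel : ∑ j ∈ range (k + 1), α * r j ≤ a 0 - b :=
    calc ∑ j ∈ range (k + 1), α * r j ≤ ∑ j ∈ range (k + 1), (a j - a (j + 1)) :=
          sum_le_sum fun j _ => by linarith [hdesc j]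
      _ = a 0 - a (k + 1) := sum_range_sub' a (k + 1)
      _ ≤ a 0 - b := by linarith [hb (k + 1)]
  have hsum : ∑ j ∈ range (k + 1), r j ≤ ∑ _j ∈ range (k + 1), (a 0 - b) / (α * (k + 1)) :=
    calc ∑ j ∈ range (k + 1), r j ≤ (a 0 - b) / α := (le_div_iff₀' hα).2 (by rwa [mul_sum])
      _ = ∑ _j ∈ range (k + 1), (a 0 - b) / (α * (k + 1)) := by
        rw [sum_const, card_range, nsmul_eq_mul]
        push_cast
        field_simp
  obtain ⟨j, hj, hle⟩ := exists_le_of_sum_le nonempty_range_add_one hsum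
  exact ⟨j, Nat.lt_succ_iff.1 (mem_range.1 hj), hle⟩

theorem pow_rpow_succ_div_self {a : ℝ} (ha : 0 ≤ a) {p : ℕ} (hp : p ≠ 0) :
    (a ^ p) ^ (((p : ℝ) + 1) / p) = a ^ (p + 1) := by
  rw [← Real.rpow_natCast_mul ha, mul_div_cancel₀ _ (Nat.cast_ne_zero.2 hp), ← Nat.cast_succ,
    Real.rpow_natCast]

section Composite

variable {n m p : ℕ} {F : Fin m → EuclideanSpace ℝ (Fin n) → ℝ} {Lp : EuclideanSpace ℝ (Fin m)}
  {g : EuclideanSpace ℝ (Fin m) → ℝ} {Lg : ℝ} {h : EuclideanSpace ℝ (Fin n) → ℝ}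

theorem taylorMap_self (x : EuclideanSpace ℝ (Fin n)) : taylorMap p F x x = euclMap F x := by
  ext i
  simp [taylorMap, euclMap, sum_range_succ', ← Pi.zero_def]

theorem sModel_self (M : ℝ) (x : EuclideanSpace ℝ (Fin n)) :
    sModel p F g h M x x = fObj F g h x := by
  simp [sModel, fObj, taylorMap_self]

variable (hFd : ∀ i, ContDiff ℝ p (F i))
  (hFlip : ∀ i (x y : EuclideanSpace ℝ (Fin n)),
    ‖iteratedFDeriv ℝ p (F i) x - iteratedFDeriv ℝ p (F i) y‖ ≤ Lp i * ‖x - y‖)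
include hFd hFlip

theorem norm_euclMap_sub_taylorMap_le (z w : EuclideanSpace ℝ (Fin n)) :
    ‖euclMap F z - taylorMap p F z w‖ ≤ ‖Lp‖ / (p + 1)! * ‖z - w‖ ^ (p + 1) := by
  have hcoef : 0 ≤ ‖z - w‖ ^ (p + 1) / (p + 1)! := by positivity
  calc ‖euclMap F z - taylorMap p F z w‖ ≤ ‖(‖z - w‖ ^ (p + 1) / (p + 1)!) • Lp‖ := by
        refine EuclideanSpace.norm_le_norm_of_abs_le fun i => ?_
        have hi := abs_sub_taylor_le_of_lipschitz (hFd i) (hFlip i) w z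
        rw [PiLp.smul_apply, smul_eq_mul, abs_mul, abs_of_nonneg hcoef]
        calc |euclMap F z i - taylorMap p F z w i| ≤ Lp i / (p + 1)! * ‖z - w‖ ^ (p + 1) := hi
          _ ≤ ‖z - w‖ ^ (p + 1) / (p + 1)! * |Lp i| := by
            rw [div_mul_comm]
            exact mul_le_mul_of_nonneg_left (le_abs_self _) hcoef
    _ = ‖Lp‖ / (p + 1)! * ‖z - w‖ ^ (p + 1) := by
        rw [norm_smul, Real.norm_of_nonneg hcoef]
        ring

variable (hglip : ∀ a b : EuclideanSpace ℝ (Fin m), |g a - g b| ≤ Lg * ‖a - b‖)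
include hglip

theorem abs_comp_euclMap_sub_comp_taylorMap_le (z w : EuclideanSpace ℝ (Fin n)) :
    |g (euclMap F z) - g (taylorMap p F z w)| ≤ Lg * ‖Lp‖ / (p + 1)! * ‖z - w‖ ^ (p + 1) := by
  have hT := norm_euclMap_sub_taylorMap_le hFd hFlip z w
  have hg := hglip (euclMap F z) (taylorMap p F z w)
  rcases le_or_gt 0 Lg with hLg | hLg
  · calc |g (euclMap F z) - g (taylorMap p F z w)|
        ≤ Lg * (‖Lp‖ / (p + 1)! * ‖z - w‖ ^ (p + 1)) := hg.trans (by gcongr)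
      _ = Lg * ‖Lp‖ / (p + 1)! * ‖z - w‖ ^ (p + 1) := by ring
  · -- a negative Lipschitz constant is only possible when `m = 0`, where all norms vanish
    have hLp : ‖Lp‖ = 0 := by
      have h0 := hglip Lp 0
      rw [sub_zero] at h0
      nlinarith [abs_nonneg (g Lp - g 0), norm_nonneg Lp]
    rw [hLp, mul_zero, zero_div, zero_mul]
    nlinarith [abs_nonneg (g (euclMap F z) - g (taylorMap p F z w)),
      norm_nonneg (euclMap F z - taylorMap p F z w)]

theorem fObj_le_sModel_add (M : ℝ) (z w : EuclideanSpace ℝ (Fin n)) :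
    fObj F g h z ≤ sModel p F g h M z w + (Lg * ‖Lp‖ - M) / (p + 1)! * ‖z - w‖ ^ (p + 1) := by
  have := abs_le.1 (abs_comp_euclMap_sub_comp_taylorMap_le hFd hFlip hglip z w)
  simp only [fObj, sModel, sub_div, sub_mul]
  linarith

theorem sModel_le_fObj_add (M : ℝ) (z w : EuclideanSpace ℝ (Fin n)) :
    sModel p F g h M z w ≤ fObj F g h z + (M + Lg * ‖Lp‖) / (p + 1)! * ‖z - w‖ ^ (p + 1) := by
  have := abs_le.1 (abs_comp_euclMap_sub_comp_taylorMap_le hFd hFlip hglip z w)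
  simp only [fObj, sModel, add_div, add_mul]
  linarith

theorem fObj_add_le_of_sModel_le {M : ℝ} {x x' : EuclideanSpace ℝ (Fin n)}
    (hdes : sModel p F g h M x' x ≤ sModel p F g h M x x) :
    fObj F g h x' + (M - Lg * ‖Lp‖) / (p + 1)! * ‖x' - x‖ ^ (p + 1) ≤ fObj F g h x := by
  have := fObj_le_sModel_add (h := h) hFd hFlip hglip M x' x
  rw [sModel_self] at hdes
  rw [← neg_sub, neg_div, neg_mul] at this
  linarith

theorem le_sModel_of_le_fObj {C : Set (EuclideanSpace ℝ (Fin n))} {fstar M : ℝ}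
    (hlb : ∀ z ∈ C, fstar ≤ fObj F g h z) (hM : Lg * ‖Lp‖ ≤ M) {z : EuclideanSpace ℝ (Fin n)}
    (hz : z ∈ C) (w : EuclideanSpace ℝ (Fin n)) : fstar ≤ sModel p F g h M z w := by
  have := fObj_le_sModel_add (h := h) hFd hFlip hglip M z w
  have : (Lg * ‖Lp‖ - M) / (p + 1)! * ‖z - w‖ ^ (p + 1) ≤ 0 :=
    mul_nonpos_of_nonpos_of_nonneg (div_nonpos_of_nonpos_of_nonneg (by linarith) (by positivity))
      (by positivity)
  linarith [hlb z hz]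

/-- `y'` is admissible in the inexact minimization of the model around `x`; the two-sided Taylor
bounds translate between model values and values of `fObj`. -/
theorem norm_prox_sub_pow_le {C : Set (EuclideanSpace ℝ (Fin n))} {fstar M μ δ D : ℝ}
    (hlb : ∀ z ∈ C, fstar ≤ fObj F g h z) (hM : Lg * ‖Lp‖ ≤ M)
    {x x' y' : EuclideanSpace ℝ (Fin n)} (hx' : x' ∈ C) (hy' : y' ∈ C) (hy'D : ‖y' - x‖ ≤ D)
    (hinx : sModel p F g h M x' x -
        sInf ((fun z => sModel p F g h M z x) '' {z | z ∈ C ∧ ‖z - x‖ ≤ D}) ≤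
      δ / (p + 1)! * ‖x' - x‖ ^ (p + 1))
    (hprox : ∀ z ∈ C, fObj F g h y' + μ / (p + 1)! * ‖y' - x‖ ^ (p + 1) ≤
      fObj F g h z + μ / (p + 1)! * ‖z - x‖ ^ (p + 1)) :
    (μ - (M + Lg * ‖Lp‖)) * ‖y' - x‖ ^ (p + 1) ≤
      (μ + δ + Lg * ‖Lp‖ - M) * ‖x' - x‖ ^ (p + 1) := by
  have hinexact := le_add_of_sub_csInf_image_le (S := {z | z ∈ C ∧ ‖z - x‖ ≤ D})
    (fun z hz => le_sModel_of_le_fObj hFd hFlip hglip hlb hM hz.1 x) ⟨hy', hy'D⟩ hinx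
  have hprox' := hprox x' hx'
  have hx'up := fObj_le_sModel_add (h := h) hFd hFlip hglip M x' x
  have hy'low := sModel_le_fObj_add (h := h) hFd hFlip hglip M y' x
  have hQ : (0 : ℝ) < (p + 1)! := by positivity
  rw [← div_le_div_iff_of_pos_right hQ, mul_div_right_comm, mul_div_right_comm (μ + δ + _ - M)]
  simp only [sub_div, add_div, sub_mul, add_mul] at hinexact hx'up hy'low ⊢
  linarith

end Composite

theorem stmt4_general {n m : ℕ} (p : ℕ) (hp : 1 ≤ p)
    (F : Fin m → EuclideanSpace ℝ (Fin n) → ℝ)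
    (Lp : EuclideanSpace ℝ (Fin m))
    (hFd : ∀ i, ContDiff ℝ p (F i))
    (hFlip : ∀ i (x y : EuclideanSpace ℝ (Fin n)),
      ‖iteratedFDeriv ℝ p (F i) x - iteratedFDeriv ℝ p (F i) y‖ ≤ Lp i * ‖x - y‖)
    (g : EuclideanSpace ℝ (Fin m) → ℝ) (Lg : ℝ)
    (hglip : ∀ a b : EuclideanSpace ℝ (Fin m), |g a - g b| ≤ Lg * ‖a - b‖)
    (C : Set (EuclideanSpace ℝ (Fin n)))
    (h : EuclideanSpace ℝ (Fin n) → ℝ)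
    (fstar : ℝ) (hlb : ∀ x ∈ C, fstar ≤ fObj F g h x)
    (M μ δ : ℝ) (hM : Lg * ‖Lp‖ < M) (hμ : M + Lg * ‖Lp‖ < μ) (hδ : 0 ≤ δ)
    (x : ℕ → EuclideanSpace ℝ (Fin n)) (hxC : ∀ k, x k ∈ C)
    (hdes : ∀ k, sModel p F g h M (x (k + 1)) (x k) ≤ sModel p F g h M (x k) (x k))
    (D : ℕ → ℝ) (hD : ∀ k, D k = ((Nat.factorial (p + 1) : ℝ) *
      (fObj F g h (x k) - fstar) / μ) ^ ((1 : ℝ) / (p + 1)))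
    (hinx : ∀ k, sModel p F g h M (x (k + 1)) (x k) -
        sInf ((fun z => sModel p F g h M z (x k)) '' {z | z ∈ C ∧ ‖z - x k‖ ≤ D k}) ≤
      δ / (Nat.factorial (p + 1) : ℝ) * ‖x (k + 1) - x k‖ ^ (p + 1))
    (y : ℕ → EuclideanSpace ℝ (Fin n)) (hyC : ∀ k, y (k + 1) ∈ C)
    (hy : ∀ k, ∀ z ∈ C,
      fObj F g h (y (k + 1)) +
          μ / (Nat.factorial (p + 1) : ℝ) * ‖y (k + 1) - x k‖ ^ (p + 1) ≤
        fObj F g h z + μ / (Nat.factorial (p + 1) : ℝ) * ‖z - x k‖ ^ (p + 1))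
    (Lμ : ℝ) (hLμ : Lμ = (μ + δ + Lg * ‖Lp‖ - M) / (μ - (M + Lg * ‖Lp‖))) :
    ∀ k : ℕ, ∃ j ≤ k,
      ‖y (j + 1) - x j‖ ^ (p + 1) ≤
        Lμ * (fObj F g h (x 0) - fstar) * (Nat.factorial (p + 1) : ℝ) /
          ((M - Lg * ‖Lp‖) * (k + 1)) ∧
      (μ / (Nat.factorial p : ℝ) * ‖y (j + 1) - x j‖ ^ p) ^ (((p : ℝ) + 1) / p) ≤
        Lμ * (μ / (Nat.factorial p : ℝ)) ^ (((p : ℝ) + 1) / p) *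
          ((fObj F g h (x 0) - fstar) * (Nat.factorial (p + 1) : ℝ) /
            ((M - Lg * ‖Lp‖) * (k + 1))) := by
  have hc : 0 ≤ Lg * ‖Lp‖ := by simpa using (abs_nonneg _).trans (hglip Lp 0)
  have hQ : (0 : ℝ) < (p + 1)! := by positivity
  have hstep : ∀ k, ‖y (k + 1) - x k‖ ^ (p + 1) ≤ Lμ * ‖x (k + 1) - x k‖ ^ (p + 1) := by
    intro k
    have hyD : ‖y (k + 1) - x k‖ ≤ D k :=
      hD k ▸ norm_sub_le_of_forall_prox_le (by linarith) hlb (hxC k) (hyC k) (hy k)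
    have := norm_prox_sub_pow_le hFd hFlip hglip hlb hM.le (hxC (k + 1)) (hyC k) hyD (hinx k) (hy k)
    rw [hLμ, div_mul_eq_mul_div, le_div_iff₀ (by linarith)]
    linarith
  have hLμ0 : 0 ≤ Lμ := hLμ ▸ div_nonneg (by linarith) (by linarith)
  intro k
  obtain ⟨j, hjk, hj⟩ := exists_le_div_of_forall_add_le (a := fun k => fObj F g h (x k))
    (r := fun k => ‖x (k + 1) - x k‖ ^ (p + 1)) (div_pos (sub_pos.2 hM) hQ)
    (fun k => fObj_add_le_of_sModel_le hFd hFlip hglip (hdes k)) (fun k => hlb _ (hxC k)) k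
  have hbound : ‖y (j + 1) - x j‖ ^ (p + 1) ≤
      Lμ * ((fObj F g h (x 0) - fstar) * (p + 1)! / ((M - Lg * ‖Lp‖) * (k + 1))) :=
    (hstep j).trans (mul_le_mul_of_nonneg_left (hj.trans_eq (by field_simp)) hLμ0)
  refine ⟨j, hjk, by simpa only [mul_div_assoc, mul_assoc] using hbound, ?_⟩
  have hμp : 0 ≤ μ / p ! := div_nonneg (by linarith) (by positivity)
  rw [Real.mul_rpow hμp (by positivity), pow_rpow_succ_div_self (norm_nonneg _) (by omega),
    mul_comm Lμ, mul_assoc]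
  exact mul_le_mul_of_nonneg_left hbound (by positivity)

/-- the `O(k^{-p/(p+1)})` rate of RHOTA for the proximal residual
(minimal norm subgradient surrogate). -/
theorem stmt4 {n m : ℕ} (hn : 1 ≤ n) (hm : 1 ≤ m) (p : ℕ) (hp : 1 ≤ p)
    (F : Fin m → EuclideanSpace ℝ (Fin n) → ℝ)
    (Lp : EuclideanSpace ℝ (Fin m))
    (hFd : ∀ i, ContDiff ℝ p (F i))
    (hFlip : ∀ i (x y : EuclideanSpace ℝ (Fin n)),
      ‖iteratedFDeriv ℝ p (F i) x - iteratedFDeriv ℝ p (F i) y‖ ≤ Lp i * ‖x - y‖)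
    (g : EuclideanSpace ℝ (Fin m) → ℝ) (Lg : ℝ)
    (hgconv : ConvexOn ℝ Set.univ g)
    (hglip : ∀ a b : EuclideanSpace ℝ (Fin m), |g a - g b| ≤ Lg * ‖a - b‖)
    (C : Set (EuclideanSpace ℝ (Fin n))) (hCne : C.Nonempty) (hCcl : IsClosed C)
    (hCcv : Convex ℝ C)
    (h : EuclideanSpace ℝ (Fin n) → ℝ) (hhconv : ConvexOn ℝ Set.univ h)
    (hhlsc : LowerSemicontinuous h)
    (fstar : ℝ) (hlb : ∀ x ∈ C, fstar ≤ fObj F g h x)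
    (M μ δ : ℝ) (hM : Lg * ‖Lp‖ < M) (hμ : M + Lg * ‖Lp‖ < μ) (hδ : 0 ≤ δ)
    (x : ℕ → EuclideanSpace ℝ (Fin n)) (hxC : ∀ k, x k ∈ C)
    (hdes : ∀ k, sModel p F g h M (x (k + 1)) (x k) ≤ sModel p F g h M (x k) (x k))
    (D : ℕ → ℝ) (hD : ∀ k, D k = ((Nat.factorial (p + 1) : ℝ) *
      (fObj F g h (x k) - fstar) / μ) ^ ((1 : ℝ) / (p + 1)))
    (hinx : ∀ k, sModel p F g h M (x (k + 1)) (x k) -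
        sInf ((fun z => sModel p F g h M z (x k)) '' {z | z ∈ C ∧ ‖z - x k‖ ≤ D k}) ≤
      δ / (Nat.factorial (p + 1) : ℝ) * ‖x (k + 1) - x k‖ ^ (p + 1))
    (y : ℕ → EuclideanSpace ℝ (Fin n)) (hyC : ∀ k, y (k + 1) ∈ C)
    (hy : ∀ k, ∀ z ∈ C,
      fObj F g h (y (k + 1)) +
          μ / (Nat.factorial (p + 1) : ℝ) * ‖y (k + 1) - x k‖ ^ (p + 1) ≤
        fObj F g h z + μ / (Nat.factorial (p + 1) : ℝ) * ‖z - x k‖ ^ (p + 1))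
    (Lμ : ℝ) (hLμ : Lμ = (μ + δ + Lg * ‖Lp‖ - M) / (μ - (M + Lg * ‖Lp‖))) :
    ∀ k : ℕ, ∃ j ≤ k,
      ‖y (j + 1) - x j‖ ^ (p + 1) ≤
        Lμ * (fObj F g h (x 0) - fstar) * (Nat.factorial (p + 1) : ℝ) /
          ((M - Lg * ‖Lp‖) * (k + 1)) ∧
      (μ / (Nat.factorial p : ℝ) * ‖y (j + 1) - x j‖ ^ p) ^ (((p : ℝ) + 1) / p) ≤
        Lμ * (μ / (Nat.factorial p : ℝ)) ^ (((p : ℝ) + 1) / p) *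
          ((fObj F g h (x 0) - fstar) * (Nat.factorial (p + 1) : ℝ) /
            ((M - Lg * ‖Lp‖) * (k + 1))) :=
  stmt4_general p hp F Lp hFd hFlip g Lg hglip C h fstar hlb M μ δ hM hμ hδ x hxC hdes D hD hinx y
    hyC hy Lμ hLμ
end
end

section
/- Let x̄ ∈ ℝ^n, M > 0, and let x* be a global minimizer over ℝ^n of y ↦ s_M(y; x̄) with x* ≠ x̄. Set r := ‖x* − x̄‖ and δ := (M/(p+1)!)‖x* − x̄‖ + M·p·‖x* − x̄‖ + L_g Σ_{j=2}^{p} ‖D_y^j T_p^F(y; x̄)|_{y=x*}‖ · ‖x* − x̄‖^{j−p}. Then the criticality measure of the subproblem satisfies M_{s_M(·;x̄)}^{r}(x*) ≤ δ ‖x* − x̄‖^{p}. -/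
open scoped BigOperators RealInnerProductSpace

noncomputable section

/-- The criticality measure `M^r_{s_M(·;x̄)}(x)` of the regularized Taylor model,
with the linearization minimized over `{y' ∈ C : ‖y' − x‖ ≤ r}`. -/
def subCrit (p : ℕ) {n m : ℕ} (F : Fin m → EuclideanSpace ℝ (Fin n) → ℝ)
    (g : EuclideanSpace ℝ (Fin m) → ℝ) (h : EuclideanSpace ℝ (Fin n) → ℝ) (M : ℝ)
    (C : Set (EuclideanSpace ℝ (Fin n))) (r : ℝ)
    (xb x : EuclideanSpace ℝ (Fin n)) : ℝ :=
  g (taylorMap p F x xb) + h x -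
    sInf ((fun y' =>
        g (taylorMap p F x xb + (fderiv ℝ (fun y => taylorMap p F y xb) x) (y' - x)) +
          M / (Nat.factorial p : ℝ) * ‖x - xb‖ ^ (p - 1) * ⟪x - xb, y' - x⟫ + h y') ''
      {y' | y' ∈ C ∧ ‖y' - x‖ ≤ r})

/-!
The Taylor model `y ↦ T_p^F(y; x̄)` is a polynomial map, so it coincides with its own Taylor
expansion around `x*`; its linearization at `x*` therefore errs by at most
`∑_{j=2}^p ‖D^j T_p^F(x*)‖ ‖y - x*‖^j`, which the Lipschitz continuity of `g` turns into an error
in the objective. Comparing `s_M(x*; x̄) ≤ s_M(y; x̄)` with the linearized model for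
`‖y - x*‖ ≤ r` then leaves the regularizer `‖·‖^{p+1}` against its first-order expansion at
`x* - x̄`, which is of order `r^{p+1}` because `‖y - x̄‖ ≤ 2r`.
-/

open scoped Nat

section FinitePowerSeries

variable {𝕜 E F : Type*} [RCLike 𝕜] [NormedAddCommGroup E] [NormedSpace 𝕜 E]
  [NormedAddCommGroup F] [NormedSpace 𝕜 F] [CompleteSpace F]
  {f : E → F} {q : FormalMultilinearSeries 𝕜 E F} {x : E}

theorem HasFiniteFPowerSeriesOnBall.eq_sum_iteratedFDeriv {n : ℕ}
    (hf : HasFiniteFPowerSeriesOnBall f q x n ⊤) (z d : E) :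
    f (z + d) = ∑ j ∈ Finset.range n, (j ! : 𝕜)⁻¹ • iteratedFDeriv 𝕜 j f z (fun _ => d) := by
  have hz := hf.changeOrigin (y := z - x) ENNReal.coe_lt_top
  rw [add_sub_cancel, ENNReal.top_sub_coe] at hz
  refine (hz.toHasFPowerSeriesOnBall.hasSum_iteratedFDeriv (by simp)).unique
    (hasSum_sum_of_ne_finset_zero fun j hj => ?_)
  rw [← hz.toHasFPowerSeriesOnBall.factorial_smul, hz.finite j (by simpa using hj)]
  simp

theorem HasFiniteFPowerSeriesOnBall.norm_sub_sub_fderiv_le {p : ℕ} (hp : 1 ≤ p)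
    (hf : HasFiniteFPowerSeriesOnBall f q x (p + 1) ⊤) (z d : E) :
    ‖f (z + d) - f z - fderiv 𝕜 f z d‖ ≤
      ∑ j ∈ Finset.Icc 2 p, ‖iteratedFDeriv 𝕜 j f z‖ * ‖d‖ ^ j := by
  have hsplit : Finset.range (p + 1) = insert 0 (insert 1 (Finset.Icc 2 p)) := by
    ext j
    simp only [Finset.mem_range, Finset.mem_insert, Finset.mem_Icc]
    omega
  rw [hf.eq_sum_iteratedFDeriv z d, hsplit, Finset.sum_insert (by simp),
    Finset.sum_insert (by simp)]
  simp only [Nat.factorial_zero, Nat.factorial_one, Nat.cast_one, inv_one, one_smul,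
    iteratedFDeriv_zero_apply, iteratedFDeriv_one_apply, add_sub_cancel_left]
  refine (norm_sum_le _ _).trans (Finset.sum_le_sum fun j _ => ?_)
  have hfact : ‖(j ! : 𝕜)⁻¹‖ ≤ 1 := by
    rw [norm_inv, RCLike.norm_natCast]
    exact inv_le_one_of_one_le₀ (mod_cast j.factorial_pos)
  calc ‖(j ! : 𝕜)⁻¹ • iteratedFDeriv 𝕜 j f z (fun _ => d)‖
      ≤ ‖iteratedFDeriv 𝕜 j f z (fun _ => d)‖ :=
        (norm_smul_le _ _).trans (mul_le_of_le_one_left (norm_nonneg _) hfact)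
    _ ≤ ‖iteratedFDeriv 𝕜 j f z‖ * ‖d‖ ^ j := by
        simpa using (iteratedFDeriv 𝕜 j f z).le_opNorm (fun _ => d)

end FinitePowerSeries

lemma two_pow_succ_le_mul_factorial {p : ℕ} (hp : 1 ≤ p) : 2 ^ (p + 1) ≤ p * (p + 1)! + p + 3 := by
  have h : 2 ^ p ≤ (p + 1)! := by
    simpa [add_comm] using Nat.factorial_mul_pow_le_factorial (m := 1) (n := p)
  obtain rfl | hp2 := eq_or_lt_of_le hp
  · decide
  · rw [pow_succ]
    nlinarith [Nat.mul_le_mul_right (p + 1)! hp2]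

lemma norm_add_pow_succ_sub_le {E : Type*} [NormedAddCommGroup E] [InnerProductSpace ℝ E]
    {p : ℕ} (hp : 1 ≤ p) {u d : E} (hd : ‖d‖ ≤ ‖u‖) :
    ‖u + d‖ ^ (p + 1) - ‖u‖ ^ (p + 1) - (p + 1) * ‖u‖ ^ (p - 1) * ⟪u, d⟫ ≤
      (2 ^ (p + 1) - p - 2) * ‖u‖ ^ (p + 1) := by
  obtain ⟨k, rfl⟩ : ∃ k, p = k + 1 := ⟨p - 1, by omega⟩
  rw [Nat.add_sub_cancel]
  set r := ‖u‖
  set b := ‖u + d‖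
  have hinner : ⟪u, d⟫ = (b ^ 2 - r ^ 2 - ‖d‖ ^ 2) / 2 := by
    rw [norm_add_sq_real]; ring
  have hb : b ≤ 2 * r := (norm_add_le u d).trans (by linarith)
  have hpow : b ^ (k + 2) ≤ 2 ^ k * r ^ k * b ^ 2 := by
    rw [pow_add, ← mul_pow]
    gcongr
  have hcoef : ((k : ℝ) + 2) / 2 ≤ 2 ^ k := by
    have : (k + 2 : ℝ) ≤ 2 ^ (k + 1) := mod_cast Nat.lt_two_pow_self (n := k + 1)
    rw [pow_succ] at this
    linarith
  have hrk : 0 ≤ r ^ k := by positivity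
  have hb2 : b ^ 2 ≤ 4 * r ^ 2 := by nlinarith [norm_nonneg (u + d)]
  have hd2 : ‖d‖ ^ 2 ≤ r ^ 2 := pow_le_pow_left₀ (norm_nonneg d) hd 2
  rw [hinner, show k + 1 + 1 = k + 2 from rfl, pow_add r k 2, pow_add (2 : ℝ) k 2]
  push_cast
  nlinarith [mul_nonneg (sub_nonneg.mpr hcoef) (mul_nonneg hrk (sub_nonneg.mpr hb2)),
    mul_nonneg (by positivity : (0 : ℝ) ≤ k + 2) (mul_nonneg hrk (sub_nonneg.mpr hd2))]

lemma regularizer_sub_linearization_le {E : Type*} [NormedAddCommGroup E]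
    [InnerProductSpace ℝ E] {p : ℕ} (hp : 1 ≤ p) {M : ℝ} (hM : 0 ≤ M) {u d : E}
    (hd : ‖d‖ ≤ ‖u‖) :
    M / (p + 1)! * ‖u + d‖ ^ (p + 1) - M / (p + 1)! * ‖u‖ ^ (p + 1) -
        M / p ! * ‖u‖ ^ (p - 1) * ⟪u, d⟫ ≤
      (M / (p + 1)! + M * p) * ‖u‖ ^ (p + 1) := by
  have hfac : ((p + 1)! : ℝ) = (p + 1) * p ! := by push_cast [Nat.factorial_succ]; ring
  have hnum : (2 : ℝ) ^ (p + 1) - p - 2 ≤ 1 + p * (p + 1)! := by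
    have : (2 : ℝ) ^ (p + 1) ≤ p * (p + 1)! + p + 3 := mod_cast two_pow_succ_le_mul_factorial hp
    linarith
  calc M / (p + 1)! * ‖u + d‖ ^ (p + 1) - M / (p + 1)! * ‖u‖ ^ (p + 1) -
        M / p ! * ‖u‖ ^ (p - 1) * ⟪u, d⟫
      = M / (p + 1)! *
          (‖u + d‖ ^ (p + 1) - ‖u‖ ^ (p + 1) - (p + 1) * ‖u‖ ^ (p - 1) * ⟪u, d⟫) := by
        rw [hfac]; field_simp
    _ ≤ M / (p + 1)! * ((1 + p * (p + 1)!) * ‖u‖ ^ (p + 1)) := by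
        gcongr
        exact (norm_add_pow_succ_sub_le hp hd).trans (by gcongr)
    _ = (M / (p + 1)! + M * p) * ‖u‖ ^ (p + 1) := by field_simp

lemma nonneg_of_abs_sub_le_mul_norm {E : Type*} [NormedAddCommGroup E] [Nontrivial E]
    {g : E → ℝ} {L : ℝ} (hg : ∀ a b, |g a - g b| ≤ L * ‖a - b‖) : 0 ≤ L := by
  obtain ⟨a, ha⟩ := exists_ne (0 : E)
  have h := (abs_nonneg _).trans (hg a 0)
  rw [sub_zero] at h
  exact nonneg_of_mul_nonneg_left h (norm_pos_iff.mpr ha)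

theorem hasFiniteFPowerSeriesOnBall_taylorMap (p : ℕ) {n m : ℕ}
    (F : Fin m → EuclideanSpace ℝ (Fin n) → ℝ) (xb : EuclideanSpace ℝ (Fin n)) :
    HasFiniteFPowerSeriesOnBall (fun y => taylorMap p F y xb)
      (fun j => if j ≤ p then
        (j ! : ℝ)⁻¹ •
          (((EuclideanSpace.equiv (Fin m) ℝ).symm :
              (Fin m → ℝ) →L[ℝ] EuclideanSpace ℝ (Fin m)).compContinuousMultilinearMap
            (ContinuousMultilinearMap.pi fun i => iteratedFDeriv ℝ j (F i) xb))
        else 0) xb (p + 1) ⊤ := by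
  refine HasFiniteFPowerSeriesOnBall.mk' (fun j hj => if_neg (by omega)) ENNReal.zero_lt_top
    fun y _ => ?_
  rw [Finset.sum_congr rfl fun j hj => by
    rw [if_pos (Nat.lt_succ_iff.mp (Finset.mem_range.mp hj))]]
  apply (EuclideanSpace.equiv (Fin m) ℝ).injective
  funext i
  simp [taylorMap, Finset.sum_apply, one_div]

theorem le_linearizedModel_of_minimizer {n m p : ℕ} (hp : 1 ≤ p)
    {F : Fin m → EuclideanSpace ℝ (Fin n) → ℝ} {g : EuclideanSpace ℝ (Fin m) → ℝ} {Lg : ℝ}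
    (hLg : 0 ≤ Lg) (hglip : ∀ a b : EuclideanSpace ℝ (Fin m), |g a - g b| ≤ Lg * ‖a - b‖)
    {h : EuclideanSpace ℝ (Fin n) → ℝ} {M : ℝ} (hM : 0 ≤ M) {xb xs y : EuclideanSpace ℝ (Fin n)}
    (hxs : ∀ z, sModel p F g h M xs xb ≤ sModel p F g h M z xb) (hy : ‖y - xs‖ ≤ ‖xs - xb‖) :
    g (taylorMap p F xs xb) + h xs -
        ((M / (p + 1)! + M * p) * ‖xs - xb‖ ^ (p + 1) +
          Lg * ∑ j ∈ Finset.Icc 2 p,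
            ‖iteratedFDeriv ℝ j (fun y => taylorMap p F y xb) xs‖ * ‖xs - xb‖ ^ j) ≤
      g (taylorMap p F xs xb + fderiv ℝ (fun y => taylorMap p F y xb) xs (y - xs)) +
        M / p ! * ‖xs - xb‖ ^ (p - 1) * ⟪xs - xb, y - xs⟫ + h y := by
  have hmin := hxs y
  simp only [sModel] at hmin
  have hrem : ‖taylorMap p F y xb - taylorMap p F xs xb -
      fderiv ℝ (fun y => taylorMap p F y xb) xs (y - xs)‖ ≤
        ∑ j ∈ Finset.Icc 2 p,
          ‖iteratedFDeriv ℝ j (fun y => taylorMap p F y xb) xs‖ * ‖xs - xb‖ ^ j := by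
    have h := (hasFiniteFPowerSeriesOnBall_taylorMap p F xb).norm_sub_sub_fderiv_le hp xs (y - xs)
    rw [add_sub_cancel] at h
    exact h.trans (Finset.sum_le_sum fun j _ => by gcongr)
  have hg := (le_abs_self _).trans (hglip (taylorMap p F y xb)
    (taylorMap p F xs xb + fderiv ℝ (fun y => taylorMap p F y xb) xs (y - xs)))
  rw [← sub_sub] at hg
  have hreg := regularizer_sub_linearization_le hp hM hy
  rw [sub_add_sub_cancel'] at hreg
  linarith [mul_le_mul_of_nonneg_left hrem hLg]

theorem stmt5_general {n m : ℕ} (hm : 1 ≤ m) (p : ℕ) (hp : 1 ≤ p)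
    (F : Fin m → EuclideanSpace ℝ (Fin n) → ℝ)
    (g : EuclideanSpace ℝ (Fin m) → ℝ) (Lg : ℝ)
    (hglip : ∀ a b : EuclideanSpace ℝ (Fin m), |g a - g b| ≤ Lg * ‖a - b‖)
    (h : EuclideanSpace ℝ (Fin n) → ℝ)
    (M : ℝ) (hM : 0 < M)
    (xb xs : EuclideanSpace ℝ (Fin n))
    (hxs : ∀ z : EuclideanSpace ℝ (Fin n), sModel p F g h M xs xb ≤ sModel p F g h M z xb)
    (hne : xs ≠ xb)
    (δ : ℝ)
    (hδ : δ = M / (Nat.factorial (p + 1) : ℝ) * ‖xs - xb‖ + M * p * ‖xs - xb‖ +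
      Lg * ∑ j ∈ Finset.Icc 2 p,
        ‖iteratedFDeriv ℝ j (fun y => taylorMap p F y xb) xs‖ *
          ‖xs - xb‖ ^ ((j : ℝ) - (p : ℝ))) :
    subCrit p F g h M Set.univ ‖xs - xb‖ xb xs ≤ δ * ‖xs - xb‖ ^ p := by
  have hr : 0 < ‖xs - xb‖ := norm_pos_iff.mpr (sub_ne_zero_of_ne hne)
  have hLg : 0 ≤ Lg := by
    have : Nonempty (Fin m) := ⟨⟨0, hm⟩⟩
    exact nonneg_of_abs_sub_le_mul_norm hglip
  have hδr : δ * ‖xs - xb‖ ^ p = (M / (p + 1)! + M * p) * ‖xs - xb‖ ^ (p + 1) +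
      Lg * ∑ j ∈ Finset.Icc 2 p,
        ‖iteratedFDeriv ℝ j (fun y => taylorMap p F y xb) xs‖ * ‖xs - xb‖ ^ j := by
    have hterm (j : ℕ) : ‖xs - xb‖ ^ ((j : ℝ) - p) * ‖xs - xb‖ ^ p = ‖xs - xb‖ ^ j := by
      rw [Real.rpow_sub hr, Real.rpow_natCast, Real.rpow_natCast, div_mul_cancel₀ _ (by positivity)]
    rw [hδ, add_mul, add_mul, mul_assoc Lg, Finset.sum_mul]
    simp_rw [mul_assoc, hterm]
    ring
  rw [hδr, subCrit, sub_le_comm]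
  refine le_csInf ⟨_, xs, ⟨trivial, by simp [hr.le]⟩, rfl⟩ ?_
  rintro _ ⟨y, ⟨-, hy⟩, rfl⟩
  exact le_linearizedModel_of_minimizer hp hLg hglip hM.le hxs hy

/-- a global minimizer `x*` of the regularized Taylor model, with
`x* ≠ x̄`, approximately annihilates the criticality measure of the subproblem:
`M^{r}_{s_M(·;x̄)}(x*) ≤ δ ‖x* − x̄‖^p` for `r = ‖x* − x̄‖` and an explicit `δ`. -/
theorem stmt5 {n m : ℕ} (hn : 1 ≤ n) (hm : 1 ≤ m) (p : ℕ) (hp : 1 ≤ p)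
    (F : Fin m → EuclideanSpace ℝ (Fin n) → ℝ)
    (Lp : EuclideanSpace ℝ (Fin m))
    (hFd : ∀ i, ContDiff ℝ p (F i))
    (hFlip : ∀ i (x y : EuclideanSpace ℝ (Fin n)),
      ‖iteratedFDeriv ℝ p (F i) x - iteratedFDeriv ℝ p (F i) y‖ ≤ Lp i * ‖x - y‖)
    (g : EuclideanSpace ℝ (Fin m) → ℝ) (Lg : ℝ)
    (hgconv : ConvexOn ℝ Set.univ g)
    (hglip : ∀ a b : EuclideanSpace ℝ (Fin m), |g a - g b| ≤ Lg * ‖a - b‖)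
    (h : EuclideanSpace ℝ (Fin n) → ℝ) (hhconv : ConvexOn ℝ Set.univ h)
    (hhcont : Continuous h)
    (M : ℝ) (hM : 0 < M)
    (xb xs : EuclideanSpace ℝ (Fin n))
    (hxs : ∀ z : EuclideanSpace ℝ (Fin n), sModel p F g h M xs xb ≤ sModel p F g h M z xb)
    (hne : xs ≠ xb)
    (δ : ℝ)
    (hδ : δ = M / (Nat.factorial (p + 1) : ℝ) * ‖xs - xb‖ + M * p * ‖xs - xb‖ +
      Lg * ∑ j ∈ Finset.Icc 2 p,
        ‖iteratedFDeriv ℝ j (fun y => taylorMap p F y xb) xs‖ *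
          ‖xs - xb‖ ^ ((j : ℝ) - (p : ℝ))) :
    subCrit p F g h M Set.univ ‖xs - xb‖ xb xs ≤ δ * ‖xs - xb‖ ^ p :=
  stmt5_general hm p hp F g Lg hglip h M hM xb xs hxs hne δ hδ

end
end
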